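/- arXiv:2601.05922 — 2 statements merged into one kernel-verified Lean document; each statement's English description precedes it below -/
import Mathlib

section
/- Let ω be a primitive cube root of unity in a field k of characteristic not 3, and let i,j,k ∈ {0,1,2}. Then the point (1, -ω^i, -ω^j, -ω^k, -ω^(-i-j-k)) is a singular point of the Burkhardt quartic, i.e. F and all its partial derivatives vanish there, where F = x0*(x0^3+x1^3+x2^3+x3^3+x4^3) + 3*x1*x2*x3*x4. -/
set_option maxHeartbeats 1000000 in
open MvPolynomial in
/-- For a primitive cube root of unity ω and i,j,l ∈ {0,1,2}, the point
(1, -ω^i, -ω^j, -ω^l, -ω^(-i-j-l)) is a singular point of the Burkhardt quartic. -/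
theorem burkhardt_singular_type_b {k : Type*} [Field k]
    (hc2 : (2 : k) ≠ 0) (hc3 : (3 : k) ≠ 0)
    (ω : k) (hω : ω ^ 2 + ω + 1 = 0)
    (i j l : ℕ) (hi : i ≤ 2) (hj : j ≤ 2) (hl : l ≤ 2) :
    let F : MvPolynomial (Fin 5) k :=
      X 0 * (X 0 ^ 3 + X 1 ^ 3 + X 2 ^ 3 + X 3 ^ 3 + X 4 ^ 3) + 3 * (X 1 * X 2 * X 3 * X 4)
    let p : Fin 5 → k :=
      ![1, -ω ^ (i : ℤ), -ω ^ (j : ℤ), -ω ^ (l : ℤ), -ω ^ (-(i + j + l : ℤ))]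
    eval p F = 0 ∧ ∀ m : Fin 5, eval p (pderiv m F) = 0 := by
  intro F p
  have hω0 : ω ≠ 0 := by rintro rfl; simp at hω
  have h3 : ω ^ 3 = 1 := by linear_combination (ω - 1) * hω
  set a := ω ^ i with hadef
  set b := ω ^ j with hbdef
  set c := ω ^ l with hcdef
  have ha : a ^ 3 = 1 := by rw [hadef, ← pow_mul, mul_comm, pow_mul, h3, one_pow]
  have hb : b ^ 3 = 1 := by rw [hbdef, ← pow_mul, mul_comm, pow_mul, h3, one_pow]
  have hc : c ^ 3 = 1 := by rw [hcdef, ← pow_mul, mul_comm, pow_mul, h3, one_pow]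
  have ha0 : a ≠ 0 := pow_ne_zero _ hω0
  have hb0 : b ≠ 0 := pow_ne_zero _ hω0
  have hc0 : c ≠ 0 := pow_ne_zero _ hω0
  have hp0 : p 0 = 1 := rfl
  have hp1 : p 1 = -a := by show -ω ^ ((i : ℕ) : ℤ) = -a; rw [zpow_natCast, hadef]
  have hp2 : p 2 = -b := by show -ω ^ ((j : ℕ) : ℤ) = -b; rw [zpow_natCast, hbdef]
  have hp3 : p 3 = -c := by show -ω ^ ((l : ℕ) : ℤ) = -c; rw [zpow_natCast, hcdef]
  have hp4 : p 4 = -(a * b * c)⁻¹ := by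
    show -ω ^ (-(i + j + l : ℤ)) = -(a * b * c)⁻¹
    rw [show (-(i + j + l : ℤ)) = -((i + j + l : ℕ) : ℤ) by push_cast; ring,
      zpow_neg, zpow_natCast, pow_add, pow_add, hadef, hbdef, hcdef]
  clear_value a b c
  clear hadef hbdef hcdef h3 hω
  have hC3 : (3 : MvPolynomial (Fin 5) k) = C 3 := (map_ofNat C 3).symm
  constructor
  · simp only [F, map_add, map_mul, map_pow, eval_X]
    rw [hp0, hp1, hp2, hp3, hp4, hC3, eval_C]
    field_simp
    linear_combination (-(b^3*c^3) + 5*b^3*c^3 - b^3*c^6 - b^6*c^3 - (a^3+1)*b^3*c^3) * ha + (2*c^3 - c^6 - b^3*c^3) * hb + (-(c^3) + 1) * hc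
  · intro m
    fin_cases m
    · simp only [F, hC3, map_add, pderiv_mul, pderiv_pow, pderiv_C, pderiv_X,
        Pi.single_apply, map_mul, map_pow, eval_X, map_one, eval_C, mul_zero, zero_mul,
        add_zero, zero_add, mul_one]
      norm_num
      simp (config := { decide := true }) only [ite_true, ite_false]
      rw [hp0, hp1, hp2, hp3, hp4]
      field_simp
      linear_combination (4*b^3*c^3 - (a^3+1)*b^3*c^3 - b^6*c^3 - b^3*c^6) * ha + (3*c^3 - c^3*(b^3+1) - c^6) * hb + (1 - c^3) * hc
    · simp only [F, hC3, map_add, pderiv_mul, pderiv_pow, pderiv_C, pderiv_X,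
        Pi.single_apply, map_mul, map_pow, eval_X, map_one, eval_C, mul_zero, zero_mul,
        add_zero, zero_add, mul_one]
      norm_num
      simp (config := { decide := true }) only [ite_true, ite_false]
      rw [hp0, hp1, hp2, hp3, hp4]
      field_simp
      linear_combination (3:k) * b * c * ha
    · simp only [F, hC3, map_add, pderiv_mul, pderiv_pow, pderiv_C, pderiv_X,
        Pi.single_apply, map_mul, map_pow, eval_X, map_one, eval_C, mul_zero, zero_mul,
        add_zero, zero_add, mul_one]
      norm_num
      simp (config := { decide := true }) only [ite_true, ite_false]
      rw [hp0, hp1, hp2, hp3, hp4]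
      field_simp
      linear_combination (3:k) * a * c * hb
    · simp only [F, hC3, map_add, pderiv_mul, pderiv_pow, pderiv_C, pderiv_X,
        Pi.single_apply, map_mul, map_pow, eval_X, map_one, eval_C, mul_zero, zero_mul,
        add_zero, zero_add, mul_one]
      norm_num
      simp (config := { decide := true }) only [ite_true, ite_false]
      rw [hp0, hp1, hp2, hp3, hp4]
      field_simp
      linear_combination (3:k) * a * b * hc
    · simp only [F, hC3, map_add, pderiv_mul, pderiv_pow, pderiv_C, pderiv_X,
        Pi.single_apply, map_mul, map_pow, eval_X, map_one, eval_C, mul_zero, zero_mul,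
        add_zero, zero_add, mul_one]
      norm_num
      simp (config := { decide := true }) only [ite_true, ite_false]
      rw [hp0, hp1, hp2, hp3, hp4]
      field_simp
      linear_combination (-3*b^3*c^3) * ha + (-3*c^3) * hb + (-3:k) * hc
end

section
/- Let M be the 5×5 matrix with rows (1,2,2,2,2), (1,-1,2,-1,-1), (1,2,-1,-1,-1), (1,-1,-1,-1,2), (1,-1,-1,2,-1), and let F = x0*(x0^3+x1^3+x2^3+x3^3+x4^3) + 3*x1*x2*x3*x4. Then for all x ∈ k^5, F(x·M) = 81·F(x), where x·M denotes right multiplication of the row vector x by M. In particular, M induces an automorphism of the Burkhardt quartic. -/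
/-- The Burkhardt quartic polynomial, as a function of a vector. -/
def burkhardtFv {k : Type*} [CommRing k] (x : Fin 5 → k) : k :=
  x 0 * (x 0 ^ 3 + x 1 ^ 3 + x 2 ^ 3 + x 3 ^ 3 + x 4 ^ 3) + 3 * (x 1 * x 2 * x 3 * x 4)

/-- For the matrix M, one has F(x·M) = 81·F(x) for all x; so M induces an
automorphism of the Burkhardt quartic. -/
theorem burkhardt_M_automorphism {k : Type*} [Field k]
    (hc2 : (2 : k) ≠ 0) (hc3 : (3 : k) ≠ 0) (x : Fin 5 → k) :
    burkhardtFv (Matrix.vecMul x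
      (!![1, 2, 2, 2, 2;
          1, -1, 2, -1, -1;
          1, 2, -1, -1, -1;
          1, -1, -1, -1, 2;
          1, -1, -1, 2, -1] : Matrix (Fin 5) (Fin 5) k)) = 81 * burkhardtFv x := by
  have h : Matrix.vecMul x
      (!![1, 2, 2, 2, 2;
          1, -1, 2, -1, -1;
          1, 2, -1, -1, -1;
          1, -1, -1, -1, 2;
          1, -1, -1, 2, -1] : Matrix (Fin 5) (Fin 5) k) =
      ![x 0 + x 1 + x 2 + x 3 + x 4,
        2 * x 0 - x 1 + 2 * x 2 - x 3 - x 4,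
        2 * x 0 + 2 * x 1 - x 2 - x 3 - x 4,
        2 * x 0 - x 1 - x 2 - x 3 + 2 * x 4,
        2 * x 0 - x 1 - x 2 + 2 * x 3 - x 4] := by
    funext i
    fin_cases i <;>
      · simp [Matrix.vecMul, dotProduct, Fin.sum_univ_five, Matrix.vecHead,
          Matrix.vecTail]
        try ring
  rw [h]
  simp only [burkhardtFv, Matrix.cons_val_zero, Matrix.cons_val_one, Matrix.head_cons,
    Matrix.cons_val_two, Matrix.tail_cons, Matrix.cons_val_three, Matrix.cons_val_four]
  ring
end
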